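/- If H is a graph whose every connected component is a subdivision of a star (equivalently, H has no internal edges, β(H)=0), then for every graph G, H is a topological minor of G if and only if H is a subgraph of G. -/

import Mathlib

open SimpleGraph

/-- The degree of a vertex: the cardinality of its neighbor set. -/
noncomputable def degN (G : SimpleGraph ℕ) (v : ℕ) : ℕ := (G.neighborSet v).ncard

/-- An edge of `G` is *internal* if it lies on a cycle or on a path joining two
vertices of degree at least 3. -/
def InternalEdge (G : SimpleGraph ℕ) (e : Sym2 ℕ) : Prop :=
  e ∈ G.edgeSet ∧
    ((∃ (v : ℕ) (c : G.Walk v v), c.IsCycle ∧ e ∈ c.edges) ∨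
     (∃ (a b : ℕ) (p : G.Walk a b), p.IsPath ∧ e ∈ p.edges ∧
        3 ≤ degN G a ∧ 3 ≤ degN G b))

/-- `beta G` is the number of internal edges of `G`. -/
noncomputable def beta (G : SimpleGraph ℕ) : ℕ := {e | InternalEdge G e}.ncard

/-- `G` is obtained from `H` by one elementary subdivision: an edge `(u,v)` is
replaced by the two edges `(u,w)`, `(w,v)`, where `w` is a fresh (isolated)
vertex. -/
def ElemSubdiv (H G : SimpleGraph ℕ) : Prop :=
  ∃ u v w : ℕ, H.Adj u v ∧ H.neighborSet w = ∅ ∧ w ≠ u ∧ w ≠ v ∧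
    G = SimpleGraph.fromEdgeSet ((H.edgeSet \ {s(u, v)}) ∪ {s(u, w), s(w, v)})

/-- `G` is a subdivision of `H` if it is obtained from `H` by finitely many
elementary subdivisions. -/
def IsSubdivision (H G : SimpleGraph ℕ) : Prop := Relation.ReflTransGen ElemSubdiv H G

/-- `H` is (isomorphic to) a subgraph of `G`: there is an injective graph
homomorphism `H →g G`. -/
def SubgraphOf {V W : Type*} (H : SimpleGraph V) (G : SimpleGraph W) : Prop :=
  ∃ f : H →g G, Function.Injective f

/-- `H` is a topological minor of `G`: some subdivision of `H` is a subgraph of `G`. -/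
def TopMinorOf (H G : SimpleGraph ℕ) : Prop :=
  ∃ H' : SimpleGraph ℕ, IsSubdivision H H' ∧ SubgraphOf H' G

/-- `H` is a minor of `G`: there are pairwise disjoint nonempty connected branch
sets in `G`, one for each vertex of `H`, with an edge of `G` between the branch
sets of any two adjacent vertices of `H`. -/
def MinorOf {V W : Type*} (H : SimpleGraph V) (G : SimpleGraph W) : Prop :=
  ∃ φ : V → Set W,
    (∀ v, (φ v).Nonempty) ∧
    (∀ v, (G.induce (φ v)).Connected) ∧
    (∀ u v, u ≠ v → Disjoint (φ u) (φ v)) ∧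
    (∀ u v, H.Adj u v → ∃ a ∈ φ u, ∃ b ∈ φ v, G.Adj a b)

/-- The star `K_{1,r}` on vertex set `ℕ`: center `0` adjacent to `1, …, r`. -/
def starN (r : ℕ) : SimpleGraph ℕ :=
  SimpleGraph.fromEdgeSet {e | ∃ i : ℕ, 1 ≤ i ∧ i ≤ r ∧ e = s(0, i)}

/-! A graph without internal edges is a forest each of whose components has at most one vertex of
degree at least `3`, i.e. a disjoint union of spiders (subdivided stars), and subdividing an edge
of such a forest keeps it one. So it suffices to embed a finite spider forest `G` into the graph
obtained by subdividing one edge `uv` of it with a fresh vertex `w`. Because the component of `uv`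
has at most one branch vertex, one side of `uv`, say the side of `v`, is a leg: a path
`v, t, …` of vertices of degree at most `2` ending in a leaf. Shifting this leg one step outwards
along `u, w, v, t, …` embeds `G`; formally this is an induction on the length of the leg, each step
being the transposition of `v` and `w`. -/

lemma SubgraphOf.trans {U V W : Type*} {A : SimpleGraph U} {B : SimpleGraph V}
    {C : SimpleGraph W} (hAB : SubgraphOf A B) (hBC : SubgraphOf B C) : SubgraphOf A C :=
  let ⟨f, hf⟩ := hAB
  let ⟨g, hg⟩ := hBC
  ⟨g.comp f, hg.comp hf⟩

namespace SimpleGraph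

variable {V : Type*} {G : SimpleGraph V} {u v w t x y : V}

lemma finite_neighborSet_of_finite_edgeSet (hfin : G.edgeSet.Finite) (v : V) :
    (G.neighborSet v).Finite :=
  Set.Finite.preimage (f := fun y => s(v, y)) (fun _ _ _ _ h => Sym2.congr_right.mp h) hfin

def subdivideEdge (G : SimpleGraph V) (u v w : V) : SimpleGraph V :=
  fromEdgeSet ((G.edgeSet \ {s(u, v)}) ∪ {s(u, w), s(w, v)})

lemma subdivideEdge_adj (hwu : w ≠ u) (hwv : w ≠ v) :
    (G.subdivideEdge u v w).Adj x y ↔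
      (G.Adj x y ∧ s(x, y) ≠ s(u, v)) ∨ s(x, y) = s(u, w) ∨ s(x, y) = s(w, v) := by
  simp only [subdivideEdge, fromEdgeSet_adj]
  aesop

lemma subdivideEdge_comm : G.subdivideEdge v u w = G.subdivideEdge u v w := by
  ext a b
  simp only [subdivideEdge, fromEdgeSet_adj, Set.mem_union, Set.mem_sdiff, Set.mem_insert_iff,
    Set.mem_singleton_iff, Sym2.eq_iff]
  tauto

lemma finite_edgeSet_subdivideEdge (hfin : G.edgeSet.Finite) :
    (G.subdivideEdge u v w).edgeSet.Finite :=
  ((hfin.sdiff.union (Set.toFinite _)).subset (edgeSet_fromEdgeSet _ ▸ Set.sdiff_subset))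

lemma neighborSet_subdivideEdge_self (hw : G.neighborSet w = ∅) (hwu : w ≠ u) (hwv : w ≠ v) :
    (G.subdivideEdge u v w).neighborSet w = {u, v} := by
  have hw' : ∀ z, ¬ G.Adj w z := Set.eq_empty_iff_forall_notMem.mp hw
  ext z
  simp only [mem_neighborSet, subdivideEdge_adj hwu hwv, Sym2.eq_iff, ne_eq, Set.mem_insert_iff,
    Set.mem_singleton_iff]
  grind

lemma neighborSet_subdivideEdge_left [DecidableEq V] (hw : G.neighborSet w = ∅) (hwu : w ≠ u)
    (hwv : w ≠ v) (huv : G.Adj u v) :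
    (G.subdivideEdge u v w).neighborSet u = Equiv.swap v w '' G.neighborSet u := by
  have hw' : ∀ z, ¬ G.Adj w z := Set.eq_empty_iff_forall_notMem.mp hw
  ext z
  simp only [mem_neighborSet, subdivideEdge_adj hwu hwv, Sym2.eq_iff, ne_eq, Set.mem_image_equiv,
    Equiv.symm_swap, Equiv.swap_apply_def]
  grind [G.adj_symm, G.irrefl]

lemma neighborSet_subdivideEdge_right [DecidableEq V] (hw : G.neighborSet w = ∅) (hwu : w ≠ u)
    (hwv : w ≠ v) (huv : G.Adj u v) :
    (G.subdivideEdge u v w).neighborSet v = Equiv.swap u w '' G.neighborSet v := by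
  rw [← subdivideEdge_comm]
  exact neighborSet_subdivideEdge_left hw hwv hwu huv.symm

lemma neighborSet_subdivideEdge_of_ne (hwu : w ≠ u) (hwv : w ≠ v) (hxu : x ≠ u) (hxv : x ≠ v)
    (hxw : x ≠ w) :
    (G.subdivideEdge u v w).neighborSet x = G.neighborSet x := by
  ext z
  simp only [mem_neighborSet, subdivideEdge_adj hwu hwv, Sym2.eq_iff, ne_eq]
  grind

lemma ncard_neighborSet_subdivideEdge (hw : G.neighborSet w = ∅) (hwu : w ≠ u) (hwv : w ≠ v)
    (huv : G.Adj u v) (hxw : x ≠ w) :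
    ((G.subdivideEdge u v w).neighborSet x).ncard = (G.neighborSet x).ncard := by
  classical
  by_cases hxu : x = u
  · subst hxu
    rw [neighborSet_subdivideEdge_left hw hwu hwv huv,
      Set.ncard_image_of_injective _ (Equiv.injective _)]
  by_cases hxv : x = v
  · subst hxv
    rw [neighborSet_subdivideEdge_right hw hwu hwv huv,
      Set.ncard_image_of_injective _ (Equiv.injective _)]
  rw [neighborSet_subdivideEdge_of_ne hwu hwv hxu hxv hxw]

/-- `uv` is a bridge of the forest `G ⊔ edge u w`, so `w` and `v` are not yet connected when the
edge `wv` is added. -/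
lemma IsAcyclic.subdivideEdge (hac : G.IsAcyclic) (huv : G.Adj u v) (hw : G.neighborSet w = ∅)
    (hwu : w ≠ u) (hwv : w ≠ v) : (G.subdivideEdge u v w).IsAcyclic := by
  have hw' : ∀ z, ¬ G.Adj w z := Set.eq_empty_iff_forall_notMem.mp hw
  set K := G ⊔ edge u w
  have hK : K.IsAcyclic := hac.sup_edge_of_not_reachable fun ⟨p⟩ => by
    cases p.reverse with
    | nil => exact hwu rfl
    | cons h _ => exact hw' _ h
  have hsplit : G.subdivideEdge u v w = K.deleteEdges {s(u, v)} ⊔ edge w v := by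
    ext a b
    simp only [subdivideEdge_adj hwu hwv, K, sup_adj, deleteEdges_adj, edge_adj,
      Set.mem_singleton_iff, Sym2.eq_iff]
    grind [G.adj_symm, G.irrefl]
  have hbridge := isBridge_iff.mp (isAcyclic_iff_forall_adj_isBridge.mp hK (Or.inl huv))
  rw [hsplit]
  refine (hK.anti (deleteEdges_le _)).sup_edge_of_not_reachable fun hreach => hbridge ?_
  refine Reachable.trans (Adj.reachable ?_) hreach
  simp [K, deleteEdges_adj, edge_adj, hwu.symm, huv.ne, hwv]

lemma Reachable.of_subdivideEdge (huv : G.Adj u v) (hw : G.neighborSet w = ∅) (hwu : w ≠ u)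
    (hwv : w ≠ v) (h : (G.subdivideEdge u v w).Reachable x y) (hx : x ≠ w) (hy : y ≠ w) :
    G.Reachable x y := by
  have hw' : ∀ z, ¬ G.Adj w z := Set.eq_empty_iff_forall_notMem.mp hw
  classical
  let f : V → V := fun z => if z = w then u else z
  have key : ∀ a b, (G.subdivideEdge u v w).Adj a b → Relation.ReflTransGen G.Adj (f a) (f b) := by
    intro a b hab
    rw [← reachable_iff_reflTransGen]
    rw [subdivideEdge_adj hwu hwv, Sym2.eq_iff, Sym2.eq_iff] at hab
    rcases hab with ⟨hab, -⟩ | (⟨rfl, rfl⟩ | ⟨rfl, rfl⟩) | (⟨rfl, rfl⟩ | ⟨rfl, rfl⟩)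
    · have ha : a ≠ w := by rintro rfl; exact hw' _ hab
      have hb : b ≠ w := by rintro rfl; exact hw' _ hab.symm
      simpa [f, ha, hb] using hab.reachable
    all_goals simp [f, hwv.symm, huv.reachable, huv.reachable.symm]
  rw [reachable_iff_reflTransGen] at h ⊢
  simpa [f, hx, hy, Function.onFun] using h.lift' f key x y

/-- Each component is a spider (a subdivided star): a tree with at most one vertex of degree at
least `3`. -/
structure IsSpiderForest (G : SimpleGraph V) : Prop where
  isAcyclic : G.IsAcyclic
  eq_of_reachable : ∀ ⦃a b⦄, 3 ≤ (G.neighborSet a).ncard → 3 ≤ (G.neighborSet b).ncard →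
    G.Reachable a b → a = b

lemma IsSpiderForest.subdivideEdge (hG : G.IsSpiderForest) (huv : G.Adj u v)
    (hw : G.neighborSet w = ∅) (hwu : w ≠ u) (hwv : w ≠ v) :
    (G.subdivideEdge u v w).IsSpiderForest where
  isAcyclic := hG.isAcyclic.subdivideEdge huv hw hwu hwv
  eq_of_reachable a b ha hb hab := by
    have hne : ∀ {x}, 3 ≤ ((G.subdivideEdge u v w).neighborSet x).ncard → x ≠ w := by
      rintro x hx rfl
      rw [neighborSet_subdivideEdge_self hw hwu hwv, Set.ncard_pair huv.ne] at hx
      omega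
    have haw := hne ha
    have hbw := hne hb
    rw [ncard_neighborSet_subdivideEdge hw hwu hwv huv haw] at ha
    rw [ncard_neighborSet_subdivideEdge hw hwu hwv huv hbw] at hb
    exact hG.eq_of_reachable ha hb (hab.of_subdivideEdge huv hw hwu hwv haw hbw)

/-- In a finite forest, the branch at `u` through `v` is then a path ending in a leaf: a leg of the
spider containing `uv`. -/
def IsLeg (G : SimpleGraph V) (u v : V) : Prop :=
  ∀ ⦃x⦄ (p : G.Walk v x), p.IsPath → u ∉ p.support → (G.neighborSet x).ncard ≤ 2

lemma IsSpiderForest.isLeg_or_isLeg (hG : G.IsSpiderForest) (huv : G.Adj u v) :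
    G.IsLeg u v ∨ G.IsLeg v u := by
  by_contra! hcon
  simp only [IsLeg, not_forall, not_le] at hcon
  obtain ⟨⟨x, p, hp, hup, hx⟩, ⟨y, q, hq, hvq, hy⟩⟩ := hcon
  obtain rfl : x = y := hG.eq_of_reachable hx hy (p.reverse.reachable.trans
    (huv.symm.reachable.trans q.reachable))
  have hpq := (hG.isAcyclic.subsingleton_path u x).elim
    ⟨.cons huv p, hp.cons hup⟩ ⟨q, hq⟩
  obtain rfl : Walk.cons huv p = q := congrArg Subtype.val hpq
  exact hvq (by simp)

/-- Returning to `u` would close the cycle `u v t … u`. -/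
lemma IsAcyclic.isPath_cons_of_adj (hac : G.IsAcyclic) (huv : G.Adj u v) (hvt : G.Adj v t)
    (htu : t ≠ u) {q : G.Walk t x} (hq : q.IsPath) (hvq : v ∉ q.support) :
    (Walk.cons hvt q).IsPath ∧ u ∉ (Walk.cons hvt q).support := by
  classical
  refine ⟨hq.cons hvq, ?_⟩
  rw [Walk.support_cons, List.mem_cons, not_or]
  refine ⟨huv.ne, fun hu => hvq ?_⟩
  refine q.support_takeUntil_subset_support hu <| hac.mem_support_of_ne_mem_support_of_adj_of_isPath
    (hq.takeUntil hu) (.of_adj hvt.symm) huv ?_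
  simp [htu.symm, huv.ne]

lemma IsLeg.of_adj (hleg : G.IsLeg u v) (hac : G.IsAcyclic) (huv : G.Adj u v) (hvt : G.Adj v t)
    (htu : t ≠ u) : G.IsLeg v t := fun _ _ hq hvq =>
  let ⟨hp, hup⟩ := hac.isPath_cons_of_adj huv hvt htu hq hvq
  hleg _ hp hup

lemma IsLeg.neighborSet_eq_singleton_or_pair (hleg : G.IsLeg u v) (huv : G.Adj u v)
    (hfin : (G.neighborSet v).Finite) :
    G.neighborSet v = {u} ∨ ∃ t, t ≠ u ∧ G.neighborSet v = {u, t} := by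
  have hu : u ∈ G.neighborSet v := huv.symm
  have hle : (G.neighborSet v).ncard ≤ 2 := hleg .nil .nil (by simp [huv.ne])
  have hpos : 0 < (G.neighborSet v).ncard := (Set.ncard_pos hfin).mpr ⟨u, hu⟩
  interval_cases hcard : (G.neighborSet v).ncard
  · left
    obtain ⟨a, ha⟩ := Set.ncard_eq_one.mp hcard
    rw [ha, Set.mem_singleton_iff] at hu
    rw [ha, hu]
  · right
    obtain ⟨a, b, hab, hS⟩ := Set.ncard_eq_two.mp hcard
    rw [hS] at hu ⊢
    rcases hu with rfl | rfl
    · exact ⟨b, hab.symm, rfl⟩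
    · exact ⟨a, hab, Set.pair_comm _ _⟩

lemma subgraphOf_subdivideEdge_of_neighborSet_eq_singleton [DecidableEq V]
    (hw : G.neighborSet w = ∅) (hwu : w ≠ u) (hwv : w ≠ v) (hv : G.neighborSet v = {u}) :
    SubgraphOf G (G.subdivideEdge u v w) := by
  refine ⟨⟨Equiv.swap v w, fun {x y} hxy => ?_⟩, Equiv.injective _⟩
  have hw' : ∀ z, ¬ G.Adj w z := Set.eq_empty_iff_forall_notMem.mp hw
  have hv' : ∀ z, G.Adj v z ↔ z = u := fun z => by
    rw [← mem_neighborSet, hv, Set.mem_singleton_iff]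
  rw [subdivideEdge_adj hwu hwv]
  simp only [Sym2.eq_iff, Equiv.swap_apply_def, ne_eq]
  grind [G.adj_symm, G.irrefl]

/-- At a vertex `v` of degree `2`, subdividing either of its edges gives the same graph up to
exchanging `v` and the new vertex `w`. -/
lemma subgraphOf_subdivideEdge_of_neighborSet_eq_pair [DecidableEq V]
    (hw : G.neighborSet w = ∅) (hwu : w ≠ u) (hwv : w ≠ v) (hwt : w ≠ t) (htu : t ≠ u)
    (hv : G.neighborSet v = {u, t}) :
    SubgraphOf (G.subdivideEdge v t w) (G.subdivideEdge u v w) := by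
  refine ⟨⟨Equiv.swap v w, fun {x y} hxy => ?_⟩, Equiv.injective _⟩
  have hw' : ∀ z, ¬ G.Adj w z := Set.eq_empty_iff_forall_notMem.mp hw
  have hv' : ∀ z, G.Adj v z ↔ z = u ∨ z = t := fun z => by
    rw [← mem_neighborSet, hv]
    rfl
  rw [subdivideEdge_adj hwv hwt] at hxy
  rw [subdivideEdge_adj hwu hwv]
  simp only [Sym2.eq_iff, Equiv.swap_apply_def, ne_eq] at hxy ⊢
  grind [G.adj_symm, G.irrefl]

theorem IsLeg.subgraphOf_subdivideEdge (hleg : G.IsLeg u v) (hfin : G.edgeSet.Finite)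
    (hac : G.IsAcyclic) (huv : G.Adj u v) (hw : G.neighborSet w = ∅) (hwu : w ≠ u)
    (hwv : w ≠ v) : SubgraphOf G (G.subdivideEdge u v w) := by
  classical
  have : Fintype G.edgeSet := hfin.fintype
  suffices key : ∀ n u v, G.Adj u v → w ≠ u → w ≠ v → G.IsLeg u v →
      (∀ x (p : G.Walk v x), p.IsPath → u ∉ p.support → p.length ≤ n) →
      SubgraphOf G (G.subdivideEdge u v w) from
    key _ u v huv hwu hwv hleg fun _ _ hp _ => hp.isTrail.length_le_card_edgeFinset
  intro n
  induction n using Nat.strong_induction_on with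
  | _ n ih =>
  intro u v huv hwu hwv hleg hlen
  obtain hv | ⟨t, htu, hv⟩ :=
    hleg.neighborSet_eq_singleton_or_pair huv (finite_neighborSet_of_finite_edgeSet hfin v)
  · exact subgraphOf_subdivideEdge_of_neighborSet_eq_singleton hw hwu hwv hv
  have hvt : G.Adj v t := by
    change t ∈ G.neighborSet v
    simp [hv]
  have hwt : w ≠ t := by
    rintro rfl
    exact (Set.eq_empty_iff_forall_notMem.mp hw v) hvt.symm
  have hlen' : ∀ x (q : G.Walk t x), q.IsPath → v ∉ q.support → q.length + 1 ≤ n :=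
    fun x q hq hvq =>
      let ⟨hp, hup⟩ := hac.isPath_cons_of_adj huv hvt htu hq hvq
      hlen x _ hp hup
  have hn : 1 ≤ n := hlen' t .nil .nil (by simp [hvt.ne])
  refine SubgraphOf.trans (ih (n - 1) (by omega) v t hvt hwv hwt (hleg.of_adj hac huv hvt htu)
    fun x q hq hvq => ?_) (subgraphOf_subdivideEdge_of_neighborSet_eq_pair hw hwu hwv hwt htu hv)
  have := hlen' x q hq hvq
  omega

theorem IsSpiderForest.subgraphOf_subdivideEdge (hG : G.IsSpiderForest)
    (hfin : G.edgeSet.Finite) (huv : G.Adj u v) (hw : G.neighborSet w = ∅) (hwu : w ≠ u)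
    (hwv : w ≠ v) : SubgraphOf G (G.subdivideEdge u v w) := by
  rcases hG.isLeg_or_isLeg huv with hleg | hleg
  · exact hleg.subgraphOf_subdivideEdge hfin hG.isAcyclic huv hw hwu hwv
  · rw [← subdivideEdge_comm]
    exact hleg.subgraphOf_subdivideEdge hfin hG.isAcyclic huv.symm hw hwv hwu

end SimpleGraph

open SimpleGraph

lemma isSpiderForest_of_forall_not_internalEdge {G : SimpleGraph ℕ}
    (h : ∀ e, ¬ InternalEdge G e) : G.IsSpiderForest where
  isAcyclic v c hc := by
    obtain ⟨e, he⟩ := c.edges.exists_mem_of_ne_nil (by simp [hc.not_nil])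
    exact h e ⟨c.edges_subset_edgeSet he, .inl ⟨v, c, hc, he⟩⟩
  eq_of_reachable a b ha hb hab := by
    by_contra hne
    obtain ⟨p⟩ := hab
    obtain ⟨e, he⟩ := p.toPath.1.edges.exists_mem_of_ne_nil (by simp [Walk.not_nil_of_ne hne])
    exact h e ⟨Walk.edges_subset_edgeSet _ he, .inr ⟨a, b, _, p.toPath.2, he, ha, hb⟩⟩

theorem IsSubdivision.subgraphOf {H Y : SimpleGraph ℕ} (h : IsSubdivision H Y)
    (hfin : H.edgeSet.Finite) (hH : H.IsSpiderForest) : SubgraphOf H Y := by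
  suffices Y.edgeSet.Finite ∧ Y.IsSpiderForest ∧ SubgraphOf H Y from this.2.2
  induction h with
  | refl => exact ⟨hfin, hH, ⟨Hom.id, Function.injective_id⟩⟩
  | tail _ hXY ih =>
    obtain ⟨hXfin, hX, hHX⟩ := ih
    obtain ⟨u, v, w, huv, hw, hwu, hwv, rfl⟩ := hXY
    exact ⟨finite_edgeSet_subdivideEdge hXfin, hX.subdivideEdge huv hw hwu hwv,
      hHX.trans (hX.subgraphOf_subdivideEdge hXfin huv hw hwu hwv)⟩

/-- If the finite graph `H` has no internal edges (`β(H) = 0`, i.e., every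
component of `H` is a subdivided star), then for every graph `G`, `H` is a
topological minor of `G` if and only if `H` is a subgraph of `G`. -/
theorem topMinor_iff_subgraph_of_no_internal (H : SimpleGraph ℕ)
    (hfin : H.edgeSet.Finite) (h : ∀ e : Sym2 ℕ, ¬ InternalEdge H e) :
    ∀ G : SimpleGraph ℕ, TopMinorOf H G ↔ SubgraphOf H G := fun _ =>
  ⟨fun ⟨_, hsub, hH'⟩ =>
    (hsub.subgraphOf hfin (isSpiderForest_of_forall_not_internalEdge h)).trans hH',
   fun hHG => ⟨H, .refl, hHG⟩⟩
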